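/- Let t ∈ ℝ³, t ≠ 0, and A invertible 3×3. The set of pairs (t̃, Ã) with t̃ ≠ 0, Ã invertible, and [t̃]× Ã = [t]× A is exactly { (λ t, (1/λ)(A + t vᵀ)) : λ ∈ ℝ \ {0}, v ∈ ℝ³, A + t vᵀ invertible }; in particular this set is infinite. -/

import Mathlib

open Matrix

/-- The 3×3 skew-symmetric matrix `[t]×` of the cross product with `t`. -/
def skew (t : Fin 3 → ℝ) : Matrix (Fin 3) (Fin 3) ℝ :=
  !![0, -t 2, t 1; t 2, 0, -t 0; -t 1, t 0, 0]

/-!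
Left-multiplying `[t']× A' = [t]× A` by `t'ᵀ` kills the left side, so `t'ᵀ [t]× A = 0`; since `A`
is invertible, `t' ⨯₃ t = 0` and `t' = l t`. Then `[t]× (l A' - A) = 0`, and as the kernel of
`[t]×` is the line through `t`, every column of `l A' - A` is a multiple of `t`, i.e.
`l A' - A = t vᵀ`. Conversely `[t]× t vᵀ = (t ⨯₃ t) vᵀ = 0`. Varying `l` gives infinitely many
decompositions.
-/

lemma cross_eq_zero_iff {F : Type*} [Field F] {v w : Fin 3 → F} (hv : v ≠ 0) :
    v ⨯₃ w = 0 ↔ ∃ a : F, a • v = w := by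
  rw [← not_ne_iff, crossProduct_ne_zero_iff_linearIndependent, LinearIndependent.pair_iff' hv,
    not_forall_not]

lemma skew_mulVec (t x : Fin 3 → ℝ) : skew t *ᵥ x = t ⨯₃ x := by
  ext i
  fin_cases i <;> simp [skew, cross_apply, mulVec, dotProduct, Fin.sum_univ_three] <;> ring

lemma vecMul_skew (t x : Fin 3 → ℝ) : x ᵥ* skew t = x ⨯₃ t := by
  ext i
  fin_cases i <;> simp [skew, cross_apply, vecMul, dotProduct, Fin.sum_univ_three] <;> ring

lemma skew_smul (l : ℝ) (t : Fin 3 → ℝ) : skew (l • t) = l • skew t := by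
  ext i j
  fin_cases i <;> fin_cases j <;> simp [skew]

lemma skew_mul_vecMulVec_self (t v : Fin 3 → ℝ) : skew t * vecMulVec t v = 0 := by
  rw [mul_vecMulVec, skew_mulVec, cross_self]
  ext i j
  simp [vecMulVec_apply]

lemma skew_mul_eq_zero_iff {t : Fin 3 → ℝ} (ht : t ≠ 0) {M : Matrix (Fin 3) (Fin 3) ℝ} :
    skew t * M = 0 ↔ ∃ v : Fin 3 → ℝ, vecMulVec t v = M := by
  refine ⟨fun h => ?_, fun ⟨v, hv⟩ => hv ▸ skew_mul_vecMulVec_self t v⟩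
  have hcol : ∀ j, ∃ a : ℝ, a • t = M.col j := fun j => by
    rw [← cross_eq_zero_iff ht, ← skew_mulVec, ← mulVec_single_one, mulVec_mulVec, h, zero_mulVec]
  choose v hv using hcol
  refine ⟨v, ?_⟩
  ext i j
  simpa [vecMulVec_apply, mul_comm] using congrFun (hv j) i

lemma exists_of_skew_mul_eq_skew_mul {t t' : Fin 3 → ℝ} {A A' : Matrix (Fin 3) (Fin 3) ℝ}
    (ht : t ≠ 0) (hA : IsUnit A.det) (h : skew t' * A' = skew t * A) :
    ∃ (l : ℝ) (v : Fin 3 → ℝ), t' = l • t ∧ l • A' = A + vecMulVec t v := by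
  have hkill : t' ᵥ* skew t ᵥ* A = 0 := by
    rw [vecMul_vecMul, ← h, ← vecMul_vecMul, vecMul_skew, cross_self, zero_vecMul]
  have hcross : t ⨯₃ t' = 0 := by
    rw [← cross_anticomm, ← vecMul_skew, eq_zero_of_vecMul_eq_zero hA.ne_zero hkill, neg_zero]
  obtain ⟨l, rfl⟩ := (cross_eq_zero_iff ht).1 hcross
  have hker : skew t * (l • A' - A) = 0 := by
    rw [Matrix.mul_sub, Matrix.mul_smul, ← Matrix.smul_mul, ← skew_smul, h, sub_self]
  obtain ⟨v, hv⟩ := (skew_mul_eq_zero_iff ht).1 hker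
  exact ⟨l, v, rfl, by rw [hv, add_sub_cancel]⟩

lemma skew_smul_mul_one_div_smul_add_vecMulVec {l : ℝ} (hl : l ≠ 0) (t v : Fin 3 → ℝ)
    (A : Matrix (Fin 3) (Fin 3) ℝ) :
    skew (l • t) * ((1 / l) • (A + vecMulVec t v)) = skew t * A := by
  rw [skew_smul, smul_mul_smul_comm, mul_one_div_cancel hl, one_smul, Matrix.mul_add,
    skew_mul_vecMulVec_self, add_zero]

lemma isUnit_det_smul_iff {K n : Type*} [Field K] [Fintype n] [DecidableEq n] {l : K}
    (hl : l ≠ 0) (M : Matrix n n K) :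
    IsUnit (l • M).det ↔ IsUnit M.det := by
  rw [det_smul, IsUnit.mul_iff, and_iff_right ((isUnit_iff_ne_zero.2 hl).pow _)]

/-- Full characterization of the decomposition ambiguity of the essential
matrix `[t]× A`, and infinitude of this set. -/
theorem essential_ambiguity_set (t : Fin 3 → ℝ) (ht : t ≠ 0)
    (A : Matrix (Fin 3) (Fin 3) ℝ) (hA : IsUnit A.det) :
    ({p : (Fin 3 → ℝ) × Matrix (Fin 3) (Fin 3) ℝ |
        p.1 ≠ 0 ∧ IsUnit p.2.det ∧ skew p.1 * p.2 = skew t * A}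
      = {p | ∃ l : ℝ, l ≠ 0 ∧ ∃ v : Fin 3 → ℝ,
          IsUnit (A + vecMulVec t v).det ∧
          p.1 = l • t ∧ p.2 = (1 / l) • (A + vecMulVec t v)}) ∧
    {p : (Fin 3 → ℝ) × Matrix (Fin 3) (Fin 3) ℝ |
        p.1 ≠ 0 ∧ IsUnit p.2.det ∧ skew p.1 * p.2 = skew t * A}.Infinite := by
  refine ⟨Set.ext fun ⟨t', A'⟩ => ⟨?_, ?_⟩, ?_⟩
  · rintro ⟨ht', hA', h⟩
    obtain ⟨l, v, rfl, hlA'⟩ := exists_of_skew_mul_eq_skew_mul ht hA h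
    have hl : l ≠ 0 := left_ne_zero_of_smul ht'
    refine ⟨l, hl, v, ?_, rfl, ?_⟩
    · rwa [← hlA', isUnit_det_smul_iff hl]
    · rw [← hlA', smul_smul, one_div, inv_mul_cancel₀ hl, one_smul]
  · rintro ⟨l, hl, v, hv, rfl, rfl⟩
    exact ⟨smul_ne_zero hl ht, (isUnit_det_smul_iff (one_div_ne_zero hl) _).2 hv,
      skew_smul_mul_one_div_smul_add_vecMulVec hl t v A⟩
  refine Set.infinite_of_injective_forall_mem
    (f := fun n : ℕ => (((n : ℝ) + 1) • t, (1 / ((n : ℝ) + 1)) • A)) ?_ fun n => ?_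
  · intro a b hab
    exact_mod_cast add_right_cancel (smul_left_injective ℝ ht (congrArg Prod.fst hab))
  · have hn : (n : ℝ) + 1 ≠ 0 := by positivity
    refine ⟨smul_ne_zero hn ht, (isUnit_det_smul_iff (one_div_ne_zero hn) _).2 hA, ?_⟩
    simpa using skew_smul_mul_one_div_smul_add_vecMulVec hn t 0 A
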